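/- If a permutation p of length n-1 is sortable by the left-greedy algorithm on t-1 stacks in series, then inserting the value n into any position of p yields a permutation of length n that is sortable by the left-greedy algorithm on t stacks in series. -/

import Mathlib

/-- A configuration for sorting with `t` stacks in series: the remaining input,
the stacks (index `0` is the leftmost, next to the output; index `t-1` is the
rightmost, next to the input; the head of each list is the top of the stack),
and the output produced so far. -/
structure Conf where
  input : List ℕ
  stks : List (List ℕ)
  output : List ℕ
deriving DecidableEq, Repr

/-- `x` may be placed on top of a stack iff the stack is empty or `x` is smaller
than the current top (stacks are increasing from top to bottom). -/
def canPush (x : ℕ) : List ℕ → Bool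
  | [] => true
  | y :: _ => decide (x < y)

/-- Moves, ordered left to right: `0` = pop the leftmost stack to the output
(legal only for the next element of the identity); `m` with `0 < m < t` = move the
top of stack `m` one stack to the left; `t` = push the next input element onto the
rightmost stack. -/
def legal (t : ℕ) (c : Conf) (m : ℕ) : Bool :=
  if m = 0 then
    match c.stks.getD 0 [] with
    | x :: _ => x == c.output.length + 1
    | [] => false
  else if m < t then
    match c.stks.getD m [] with
    | x :: _ => canPush x (c.stks.getD (m-1) [])
    | [] => false
  else if m = t then
    match c.input with
    | x :: _ => canPush x (c.stks.getD (t-1) [])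
    | [] => false
  else false

/-- Perform move `m` on configuration `c` (with `t` stacks). -/
def applyMove (t : ℕ) (c : Conf) (m : ℕ) : Conf :=
  if m = 0 then
    match c.stks.getD 0 [] with
    | x :: s => ⟨c.input, c.stks.set 0 s, c.output ++ [x]⟩
    | [] => c
  else if m < t then
    match c.stks.getD m [] with
    | x :: s => ⟨c.input, (c.stks.set m s).set (m-1) (x :: c.stks.getD (m-1) []), c.output⟩
    | [] => c
  else
    match c.input with
    | x :: rest => ⟨rest, c.stks.set (t-1) (x :: c.stks.getD (t-1) []), c.output⟩
    | [] => c

def initConf (t : ℕ) (p : List ℕ) : Conf := ⟨p, List.replicate t [], []⟩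

/-- The fully sorted configuration: empty input and stacks, output `1,2,...,n`. -/
def finalConf (t n : ℕ) : Conf := ⟨[], List.replicate t [], List.range' 1 n⟩

/-- Run a sequence of moves, requiring each to be legal. -/
def runLegal (t : ℕ) : Conf → List ℕ → Option Conf
  | c, [] => some c
  | c, m :: ms => if legal t c m then runLegal t (applyMove t c m) ms else none

/-- `p` is sortable by `t` stacks in series by some sequence of legal moves. -/
def Sortable (t : ℕ) (p : List ℕ) : Prop :=
  ∃ ms : List ℕ, runLegal t (initConf t p) ms = some (finalConf t p.length)

/-- The leftmost legal move, if any. -/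
def leftMove (t : ℕ) (c : Conf) : Option ℕ :=
  ((List.range (t+1)).filter (fun m => legal t c m)).head?

/-- The rightmost legal move, if any. -/
def rightMove (t : ℕ) (c : Conf) : Option ℕ :=
  ((List.range (t+1)).filter (fun m => legal t c m)).getLast?

/-- One step of a greedy algorithm given by the move selector `mv`
(the configuration is unchanged if no move is legal, i.e. the algorithm fails or is done). -/
def greedyStep (mv : ℕ → Conf → Option ℕ) (t : ℕ) (c : Conf) : Conf :=
  match mv t c with
  | some m => applyMove t c m
  | none => c

/-- The greedy algorithm given by `mv` sorts `p` with `t` stacks in series. -/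
def GreedySorts (mv : ℕ → Conf → Option ℕ) (t : ℕ) (p : List ℕ) : Prop :=
  ∃ k : ℕ, (greedyStep mv t)^[k] (initConf t p) = finalConf t p.length

def LeftGreedySorts : ℕ → List ℕ → Prop := GreedySorts leftMove
def RightGreedySorts : ℕ → List ℕ → Prop := GreedySorts rightMove

/-- `p` is a permutation of `1,...,n` (as a list). -/
def IsPermOf (n : ℕ) (p : List ℕ) : Prop := p.Perm (List.range' 1 n)

/-- The position of the element `x` in configuration `c`: `0` if in the output
(furthest left), `j+1` if in stack `j`, `t+1` if still in the input (furthest right). -/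
def posOf (t : ℕ) (c : Conf) (x : ℕ) : ℕ :=
  if x ∈ c.output then 0
  else match (List.range t).find? (fun j => decide (x ∈ c.stks.getD j [])) with
    | some j => j + 1
    | none => t + 1

/-- `c` is at the `i`-th critical moment for the greedy algorithm `mv` on a
permutation of length `n`: either the chosen move is the entry of the `i`-th
element into the stacks, or the algorithm fails (no legal move, incomplete output). -/
def IsCrit (mv : ℕ → Conf → Option ℕ) (t i n : ℕ) (c : Conf) : Prop :=
  (c.input.length + i = n + 1 ∧ mv t c = some t) ∨
  (mv t c = none ∧ c.output.length < n)

/-- `c` is the configuration at the `i`-th critical moment of the greedy algorithm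
`mv` run on `p` (the first moment along the run satisfying `IsCrit`). -/
def CritConf (mv : ℕ → Conf → Option ℕ) (t i n : ℕ) (p : List ℕ) (c : Conf) : Prop :=
  ∃ k : ℕ, (greedyStep mv t)^[k] (initConf t p) = c ∧ IsCrit mv t i n c ∧
    ∀ k' < k, ¬ IsCrit mv t i n ((greedyStep mv t)^[k'] (initConf t p))

/-- No stack is empty while some stack to its right is nonempty. -/
def NoGap (t : ℕ) (c : Conf) : Prop :=
  ∀ j j' : ℕ, j < j' → j' < t → c.stks.getD j' [] ≠ [] → c.stks.getD j [] ≠ []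

/-- `r` contains `q` as a pattern. -/
def ContainsPat (r q : List ℕ) : Prop :=
  ∃ f : Fin q.length → Fin r.length, StrictMono f ∧
    ∀ a b : Fin q.length, q.get a < q.get b ↔ r.get (f a) < r.get (f b)


/-!
Let `N` be the length of `p` and `t = T + 1`. Run the left-greedy algorithm on `T + 1` stacks
alongside the one on `T` stacks, keeping the large configuration a lift of the small one: the
same input, output and first `T` stacks, except that the new maximum `N + 1` either still waits
in the input or lies at the bottom of some stack `r`, the extra stack `T` being otherwise empty.
As `N + 1` exceeds every other value, it never blocks a move of the small machine, so each small
move is mirrored by the same move, a push becoming a push onto stack `T` followed by a move onto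
stack `T - 1`. The only additional moves of the large machine slide `N + 1`, when it is alone,
onto an empty stack to its left; it is not output early, since the small machine has output
fewer than `N` values while it still has a move. Once the small machine has sorted `p`, `N + 1`
slides to stack `0` and is output last.
-/

open List

theorem List.getD_set_of_lt {α : Type*} {l : List α} {i : ℕ} (j : ℕ) (a d : α)
    (h : i < l.length) : (l.set i a).getD j d = if j = i then a else l.getD j d := by
  simp only [getD_eq_getElem?_getD, getElem?_set]
  grind

theorem List.getD_append_default {α : Type*} (l : List α) (d : α) (j : ℕ) :
    (l ++ [d]).getD j d = l.getD j d := by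
  grind

theorem List.sum_map_set_add {α : Type*} (f : α → ℕ) (d : α) :
    ∀ (l : List α) (i : ℕ) (a : α), i < l.length →
      ((l.set i a).map f).sum + f (l.getD i d) = (l.map f).sum + f a
  | [], _, _, h => by simp at h
  | b :: l, 0, a, _ => by
    simp only [set_cons_zero, map_cons, sum_cons, getD_cons_zero]
    omega
  | b :: l, i + 1, a, h => by
    have := sum_map_set_add f d l i a (by simpa using h)
    simp only [set_cons_succ, map_cons, sum_cons, getD_cons_succ]
    omega

namespace Conf

def stack (c : Conf) (j : ℕ) : List ℕ := c.stks.getD j []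

variable {c : Conf} {j : ℕ}

@[simp] theorem stack_mk (i s o : List _) : (Conf.mk i s o).stack j = s.getD j [] := rfl

theorem stack_mk_set {i : ℕ} {a o l : List ℕ} (h : i < c.stks.length) :
    (Conf.mk a (c.stks.set i l) o).stack j = if j = i then l else c.stack j :=
  getD_set_of_lt _ _ _ h

theorem stack_eq_nil_of_length_le (h : c.stks.length ≤ j) : c.stack j = [] :=
  getD_eq_default _ _ h

theorem lt_length_of_stack_eq_cons {x : ℕ} {s : List ℕ} (h : c.stack j = x :: s) :
    j < c.stks.length :=
  Nat.lt_of_not_le fun hj => by simp [stack_eq_nil_of_length_le hj] at h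

theorem ext_stack {c' : Conf} (hin : c.input = c'.input) (hout : c.output = c'.output)
    (hlen : c.stks.length = c'.stks.length) (hs : ∀ j, c.stack j = c'.stack j) : c = c' := by
  obtain ⟨i, s, o⟩ := c
  obtain ⟨i', s', o'⟩ := c'
  simp only at hin hout hlen
  subst hin hout
  congr
  refine ext_getElem hlen fun j h h' => ?_
  simpa only [stack_mk, getD_eq_getElem _ _ h, getD_eq_getElem _ _ h'] using hs j

end Conf

open Conf

section Moves

variable {t m : ℕ} {c : Conf}

theorem legal_zero_iff : legal t c 0 = true ↔ ∃ s, c.stack 0 = (c.output.length + 1) :: s := by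
  unfold legal stack
  generalize c.stks.getD 0 [] = s
  cases s <;> simp

theorem legal_of_lt_iff (h0 : m ≠ 0) (hm : m < t) :
    legal t c m = true ↔ ∃ x s, c.stack m = x :: s ∧ canPush x (c.stack (m - 1)) = true := by
  unfold legal stack
  simp only [h0, hm, if_false, if_true]
  generalize c.stks.getD m [] = s
  cases s <;> simp

theorem legal_self_iff (h0 : t ≠ 0) :
    legal t c t = true ↔
      ∃ x rest, c.input = x :: rest ∧ canPush x (c.stack (t - 1)) = true := by
  unfold legal stack
  simp only [h0, lt_irrefl, if_false, if_true]
  cases c.input <;> simp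

theorem legal_of_gt (h : t < m) : legal t c m = false := by
  simp [legal, show m ≠ 0 by omega, show ¬ m < t by omega, show m ≠ t by omega]

theorem legal_eq_false_of_stack_eq_nil (hm : m < t) (h : c.stack m = []) :
    legal t c m = false := by
  rcases eq_or_ne m 0 with rfl | h0
  · simpa [h] using (legal_zero_iff (t := t) (c := c)).not
  · simpa [h] using (legal_of_lt_iff (c := c) h0 hm).not

theorem stack_ne_nil_of_legal (hm : m < t) (h : legal t c m = true) : c.stack m ≠ [] :=
  fun hs => by simp [legal_eq_false_of_stack_eq_nil hm hs] at h

theorem legal_eq_false_of_empty (hin : c.input = []) (hs : ∀ j, c.stack j = []) :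
    legal t c m = false := by
  rcases eq_or_ne m 0 with rfl | h0
  · simpa [hs] using (legal_zero_iff (t := t) (c := c)).not
  rcases Nat.lt_trichotomy m t with hmt | rfl | hmt
  · exact legal_eq_false_of_stack_eq_nil hmt (hs m)
  · simpa [hin] using (legal_self_iff h0 (c := c)).not
  · exact legal_of_gt hmt

theorem legal_congr {t' k : ℕ} {c' : Conf} (hk : k < t) (hk' : k < t')
    (hout : c.output.length = c'.output.length)
    (hhead : (c.stack k).head? = (c'.stack k).head?)
    (hpush : ∀ x ∈ (c'.stack k).head?,
      canPush x (c.stack (k - 1)) = canPush x (c'.stack (k - 1))) :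
    legal t c k = legal t' c' k := by
  rw [Bool.eq_iff_iff]
  rcases eq_or_ne k 0 with rfl | h0
  · simp only [legal_zero_iff, ← head?_eq_some_iff, hhead, hout]
  · have hcons (l : List ℕ) (P : ℕ → Prop) :
        (∃ x s, l = x :: s ∧ P x) ↔ ∃ x ∈ l.head?, P x := by
      cases l <;> simp
    simp only [legal_of_lt_iff h0 hk, legal_of_lt_iff h0 hk', hcons, hhead]
    exact exists_congr fun x => and_congr_right fun hx => by rw [hpush x hx]

theorem canPush_append_singleton {x N : ℕ} (hx : x ≤ N) (s : List ℕ) :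
    canPush x (s ++ [N + 1]) = canPush x s := by
  cases s with
  | nil => simpa [canPush] using Nat.lt_succ_of_le hx
  | cons => rfl

theorem canPush_succ_iff {N : ℕ} {l : List ℕ} (hl : ∀ y ∈ l, y ≤ N) :
    canPush (N + 1) l = true ↔ l = [] := by
  cases l with
  | nil => simp [canPush]
  | cons y s => simpa [canPush] using (hl y (by simp)).trans N.le_succ

theorem leftMove_eq_some_iff :
    leftMove t c = some m ↔
      m ≤ t ∧ legal t c m = true ∧ ∀ k < m, legal t c k = false := by
  simp only [leftMove, head?_filter, find?_range_eq_some, mem_range, Nat.lt_succ_iff,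
    Bool.not_eq_true']
  tauto

theorem greedyStep_of_leftMove_eq_some (h : leftMove t c = some m) :
    greedyStep leftMove t c = applyMove t c m := by
  simp [greedyStep, h]

theorem applyMove_zero {x : ℕ} {s : List ℕ} (h : c.stack 0 = x :: s) :
    applyMove t c 0 = ⟨c.input, c.stks.set 0 s, c.output ++ [x]⟩ := by
  unfold applyMove
  simp only [stack] at h
  simp only [if_true, h]

theorem applyMove_of_lt {x : ℕ} {s : List ℕ} (h0 : m ≠ 0) (hm : m < t)
    (h : c.stack m = x :: s) :
    applyMove t c m =
      ⟨c.input, (c.stks.set m s).set (m - 1) (x :: c.stack (m - 1)), c.output⟩ := by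
  unfold applyMove
  simp only [stack] at h ⊢
  simp only [h0, hm, if_false, if_true, h]

theorem applyMove_self {x : ℕ} {rest : List ℕ} (h0 : t ≠ 0) (h : c.input = x :: rest) :
    applyMove t c t = ⟨rest, c.stks.set (t - 1) (x :: c.stack (t - 1)), c.output⟩ := by
  simp [applyMove, h0, h, stack]

theorem length_stks_applyMove : (applyMove t c m).stks.length = c.stks.length := by
  unfold applyMove
  split_ifs <;> split <;> simp

theorem stack_applyMove_zero {x : ℕ} {s : List ℕ} (h : c.stack 0 = x :: s) (j : ℕ) :
    (applyMove t c 0).stack j = if j = 0 then s else c.stack j := by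
  rw [applyMove_zero h, stack_mk_set (lt_length_of_stack_eq_cons h)]

theorem stack_applyMove_of_lt {x : ℕ} {s : List ℕ} (h0 : m ≠ 0) (hm : m < t)
    (h : c.stack m = x :: s) (j : ℕ) :
    (applyMove t c m).stack j =
      if j = m - 1 then x :: c.stack (m - 1) else if j = m then s else c.stack j := by
  have hlen := lt_length_of_stack_eq_cons h
  rw [applyMove_of_lt h0 hm h, stack_mk, getD_set_of_lt _ _ _ (by rw [length_set]; omega),
    getD_set_of_lt _ _ _ hlen]
  rfl

theorem stack_applyMove_self {x : ℕ} {rest : List ℕ} (h0 : t ≠ 0) (hlen : t ≤ c.stks.length)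
    (h : c.input = x :: rest) (j : ℕ) :
    (applyMove t c t).stack j = if j = t - 1 then x :: c.stack (t - 1) else c.stack j := by
  rw [applyMove_self h0 h, stack_mk_set (by omega)]

theorem applyMove_push_shift {T x : ℕ} {rest : List ℕ} (hT : T ≠ 0)
    (hlen : c.stks.length = T + 1) (hin : c.input = x :: rest) :
    applyMove (T + 1) (applyMove (T + 1) c (T + 1)) T =
      ⟨rest, c.stks.set (T - 1) (x :: c.stack (T - 1)), c.output⟩ := by
  have hx : (applyMove (T + 1) c (T + 1)).stack T = x :: c.stack T := by
    rw [stack_applyMove_self (by omega) (by omega) hin]; simp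
  refine ext_stack ?_ ?_ ?_ fun j => ?_
  · rw [applyMove_of_lt hT (by omega) hx, applyMove_self (by omega) hin]
  · rw [applyMove_of_lt hT (by omega) hx, applyMove_self (by omega) hin]
  · simp [length_stks_applyMove]
  · simp only [stack_applyMove_of_lt hT (by omega : T < T + 1) hx,
      stack_applyMove_self (by omega) (by omega : T + 1 ≤ c.stks.length) hin,
      stack_mk_set (by omega : T - 1 < c.stks.length), Nat.add_sub_cancel]
    split_ifs <;> first | omega | (subst_vars; rfl)

theorem iterate_two_greedyStep_push {T x : ℕ} {rest : List ℕ} (hT : T ≠ 0)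
    (hlen : c.stks.length = T + 1) (hin : c.input = x :: rest)
    (hlow : ∀ k ≤ T, legal (T + 1) c k = false)
    (hx : canPush x (c.stack (T - 1)) = true) (hxT : canPush x (c.stack T) = true) :
    (greedyStep leftMove (T + 1))^[2] c = applyMove (T + 1) (applyMove (T + 1) c (T + 1)) T := by
  have h1 : leftMove (T + 1) c = some (T + 1) :=
    leftMove_eq_some_iff.2 ⟨le_rfl, (legal_self_iff (by omega)).2 ⟨x, rest, hin, by simpa⟩,
      fun k hk => hlow k (by omega)⟩
  have hstack := stack_applyMove_self (t := T + 1) (by omega) (by omega) hin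
  simp only [Nat.add_sub_cancel] at hstack
  have hbelow : ∀ j < T, (applyMove (T + 1) c (T + 1)).stack j = c.stack j := fun j hj => by
    rw [hstack, if_neg (by omega)]
  have h2 : leftMove (T + 1) (applyMove (T + 1) c (T + 1)) = some T := by
    refine leftMove_eq_some_iff.2 ⟨by omega, ?_, fun k hk => ?_⟩
    · rw [legal_of_lt_iff hT (by omega)]
      exact ⟨x, c.stack T, by rw [hstack, if_pos rfl], by rwa [hbelow _ (by omega)]⟩
    · rw [← hlow k hk.le]
      refine legal_congr (by omega) (by omega) ?_ (by rw [hbelow k hk]) fun y _ => ?_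
      · rw [applyMove_self (by omega) hin]
      · rw [hbelow _ (by omega)]
  rw [Function.iterate_succ_apply', Function.iterate_one, greedyStep_of_leftMove_eq_some h1,
    greedyStep_of_leftMove_eq_some h2]

end Moves

section Invariant

def Conf.size (c : Conf) : ℕ := c.input.length + (c.stks.map length).sum + c.output.length

variable {t m : ℕ} {c : Conf}

theorem size_applyMove (hlen : t ≤ c.stks.length) (hm : legal t c m = true) :
    (applyMove t c m).size = c.size := by
  rcases eq_or_ne m 0 with rfl | h0
  · obtain ⟨s, hs⟩ := legal_zero_iff.1 hm
    have := sum_map_set_add length [] c.stks 0 s (lt_length_of_stack_eq_cons hs)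
    simp only [stack] at hs
    simp only [size, applyMove_zero hs, hs, length_cons, length_append, length_nil] at this ⊢
    omega
  rcases Nat.lt_trichotomy m t with hmt | rfl | hmt
  · obtain ⟨x, s, hs, -⟩ := (legal_of_lt_iff h0 hmt).1 hm
    have hm := lt_length_of_stack_eq_cons hs
    have h1 := sum_map_set_add length [] c.stks m s hm
    have h2 := sum_map_set_add length [] (c.stks.set m s) (m - 1) (x :: c.stack (m - 1))
      (by rw [length_set]; omega)
    rw [getD_set_of_lt _ _ _ hm, if_neg (by omega)] at h2
    simp only [size, applyMove_of_lt h0 hmt hs]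
    simp only [stack] at hs h2 ⊢
    simp only [hs, length_cons] at h1 h2 ⊢
    omega
  · obtain ⟨x, rest, hin, -⟩ := (legal_self_iff h0).1 hm
    have := sum_map_set_add length [] c.stks (m - 1) (x :: c.stack (m - 1)) (by omega)
    simp only [size, applyMove_self h0 hin, hin, length_cons]
    simp only [stack, length_cons] at this ⊢
    omega
  · simp [legal_of_gt hmt] at hm

theorem mem_of_mem_applyMove {x : ℕ} (hlen : t ≤ c.stks.length) (hm : legal t c m = true)
    (hx : x ∈ (applyMove t c m).input ∨ ∃ j, x ∈ (applyMove t c m).stack j) :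
    x ∈ c.input ∨ ∃ j, x ∈ c.stack j := by
  rcases eq_or_ne m 0 with rfl | h0
  · obtain ⟨s, hs⟩ := legal_zero_iff.1 hm
    rcases hx with hx | ⟨j, hx⟩
    · rw [applyMove_zero hs] at hx
      exact .inl hx
    rw [stack_applyMove_zero hs] at hx
    split_ifs at hx
    · exact .inr ⟨0, by simp [hs, hx]⟩
    · exact .inr ⟨j, hx⟩
  rcases Nat.lt_trichotomy m t with hmt | rfl | hmt
  · obtain ⟨y, s, hs, -⟩ := (legal_of_lt_iff h0 hmt).1 hm
    rcases hx with hx | ⟨j, hx⟩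
    · rw [applyMove_of_lt h0 hmt hs] at hx
      exact .inl hx
    rw [stack_applyMove_of_lt h0 hmt hs] at hx
    split_ifs at hx
    · rcases mem_cons.1 hx with rfl | hx
      · exact .inr ⟨m, by simp [hs]⟩
      · exact .inr ⟨m - 1, hx⟩
    · exact .inr ⟨m, by simp [hs, hx]⟩
    · exact .inr ⟨j, hx⟩
  · obtain ⟨y, rest, hin, -⟩ := (legal_self_iff h0).1 hm
    rcases hx with hx | ⟨j, hx⟩
    · rw [applyMove_self h0 hin] at hx
      exact .inl (by simp [hin, hx])
    rw [stack_applyMove_self h0 hlen hin] at hx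
    split_ifs at hx
    · rcases mem_cons.1 hx with rfl | hx
      · exact .inl (by simp [hin])
      · exact .inr ⟨m - 1, hx⟩
    · exact .inr ⟨j, hx⟩
  · simp [legal_of_gt hmt] at hm

structure Conf.Valid (N T : ℕ) (d : Conf) : Prop where
  length_stks : d.stks.length = T
  size_eq : d.size = N
  input_le : ∀ x ∈ d.input, x ≤ N
  stack_le : ∀ j, ∀ x ∈ d.stack j, x ≤ N

variable {N T : ℕ} {d : Conf}

theorem Conf.Valid.applyMove (hd : d.Valid N T) (hm : legal T d m = true) :
    (applyMove T d m).Valid N T := by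
  have hlen := hd.length_stks.ge
  have hle : ∀ x, (x ∈ d.input ∨ ∃ j, x ∈ d.stack j) → x ≤ N := by
    rintro x (hx | ⟨j, hx⟩)
    exacts [hd.input_le x hx, hd.stack_le j x hx]
  exact ⟨by rw [length_stks_applyMove, hd.length_stks],
    by rw [size_applyMove hlen hm, hd.size_eq],
    fun x hx => hle x (mem_of_mem_applyMove hlen hm (.inl hx)),
    fun j x hx => hle x (mem_of_mem_applyMove hlen hm (.inr ⟨j, hx⟩))⟩

theorem Conf.Valid.greedyStep (hd : d.Valid N T) : (greedyStep leftMove T d).Valid N T := by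
  cases hm : leftMove T d with
  | none => simpa [_root_.greedyStep, hm] using hd
  | some m =>
    rw [greedyStep_of_leftMove_eq_some hm]
    exact hd.applyMove (leftMove_eq_some_iff.1 hm).2.1

theorem Conf.Valid.iterate (hd : d.Valid N T) (k : ℕ) :
    ((_root_.greedyStep leftMove T)^[k] d).Valid N T := by
  induction k with
  | zero => exact hd
  | succ k ih => rw [Function.iterate_succ_apply']; exact ih.greedyStep

theorem Conf.Valid.output_length_lt (hd : d.Valid N T) (hm : leftMove T d = some m) :
    d.output.length < N := by
  by_contra hN
  have hsize := hd.size_eq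
  simp only [size] at hsize
  have hin : d.input = [] := length_eq_zero_iff.1 (by omega)
  have hs : ∀ j, d.stack j = [] := by
    intro j
    by_cases hj : j < d.stks.length
    · have hsum : (d.stks.map length).sum = 0 := by omega
      rw [sum_eq_zero_iff] at hsum
      refine length_eq_zero_iff.1 (hsum _ (mem_map_of_mem ?_))
      rw [stack, getD_eq_getElem _ _ hj]
      exact getElem_mem hj
    · exact stack_eq_nil_of_length_le (by omega)
  simpa [legal_eq_false_of_empty hin hs] using (leftMove_eq_some_iff.1 hm).2.1

theorem valid_initConf (T : ℕ) {p : List ℕ} (hp : IsPermOf N p) : (initConf T p).Valid N T := by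
  have hle : ∀ x ∈ p, x ≤ N := fun x hx => by
    have := hp.mem_iff.1 hx
    simp only [mem_range'_1] at this
    omega
  refine ⟨by simp [initConf], ?_, hle, fun j x hx => ?_⟩
  · simp [initConf, Conf.size, hp.length_eq]
  · simp [initConf, stack] at hx

theorem valid_finalConf (N T : ℕ) : (finalConf T N).Valid N T :=
  ⟨by simp [finalConf], by simp [finalConf, Conf.size], by simp [finalConf],
    by simp [finalConf, stack]⟩

end Invariant

section Lift

/- The configurations with one more stack that shadow a configuration `d` of the `T`-stack
machine: `N + 1` sits in the input at position `i`, or at the bottom of stack `r`. The extra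
stack is stack `T`, next to the input. -/

def liftInput (N i : ℕ) (d : Conf) : Conf :=
  ⟨d.input.take i ++ (N + 1) :: d.input.drop i, d.stks ++ [[]], d.output⟩

def liftStack (N r : ℕ) (d : Conf) : Conf :=
  ⟨d.input, (d.stks ++ [[]]).set r (d.stack r ++ [N + 1]), d.output⟩

/-- In `liftStack N r d`, the value `N + 1` is alone on stack `r` and may move onto the empty
stack `r - 1`. -/
def CanSlide (r : ℕ) (d : Conf) : Prop := r ≠ 0 ∧ d.stack r = [] ∧ d.stack (r - 1) = []

variable {N T i r m : ℕ} {d : Conf}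

theorem stack_liftInput (j : ℕ) : (liftInput N i d).stack j = d.stack j :=
  getD_append_default _ _ _

theorem stack_liftStack (hr : r ≤ d.stks.length) (j : ℕ) :
    (liftStack N r d).stack j = if j = r then d.stack r ++ [N + 1] else d.stack j := by
  have hr' : r < (d.stks ++ [[]]).length := by rw [length_append, length_singleton]; omega
  rw [liftStack, stack_mk, getD_set_of_lt _ _ _ hr', getD_append_default]
  rfl

theorem legal_liftInput_of_lt {k : ℕ} (hk : k < T) :
    legal (T + 1) (liftInput N i d) k = legal T d k :=
  legal_congr (by omega) hk rfl (by rw [stack_liftInput]) fun x _ => by rw [stack_liftInput]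

theorem legal_liftStack_of_lt {k : ℕ} (hd : d.Valid N T) (hr : r ≤ T) (hk : k < T)
    (hkr : k ≠ r ∨ d.stack k ≠ []) :
    legal (T + 1) (liftStack N r d) k = legal T d k := by
  have hr' : r ≤ d.stks.length := hd.length_stks ▸ hr
  refine legal_congr (by omega) hk rfl ?_ fun x hx => ?_
  · rw [stack_liftStack hr']
    split_ifs with hkr'
    · subst hkr'
      obtain ⟨x, s, hs⟩ := exists_cons_of_ne_nil (hkr.resolve_left (not_not.2 rfl))
      simp [hs]
    · rfl
  · have hxN : x ≤ N := hd.stack_le k x (mem_of_mem_head? hx)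
    rw [stack_liftStack hr']
    split_ifs
    · subst_vars; exact canPush_append_singleton hxN _
    · rfl

theorem legal_liftStack_self (hd : d.Valid N T) (hr0 : r ≠ 0) (hr : r ≤ T)
    (h : d.stack r = []) :
    legal (T + 1) (liftStack N r d) r = decide (d.stack (r - 1) = []) := by
  have hr' : r ≤ d.stks.length := hd.length_stks ▸ hr
  rw [Bool.eq_iff_iff, legal_of_lt_iff hr0 (by omega), stack_liftStack hr', if_pos rfl, h,
    stack_liftStack hr', if_neg (by omega), decide_eq_true_iff]
  simp [canPush_succ_iff (hd.stack_le (r - 1))]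

theorem legal_liftStack_zero (h : d.stack 0 = []) (hout : d.output.length < N) :
    legal (T + 1) (liftStack N 0 d) 0 = false := by
  rw [← Bool.not_eq_true, legal_zero_iff, stack_liftStack (Nat.zero_le _), if_pos rfl, h]
  simpa [liftStack] using hout.ne'

theorem lt_and_legal_of_legal_liftStack {k : ℕ} (hd : d.Valid N T) (hout : d.output.length < N)
    (hr : r ≤ T) (hk : k ≤ T) (hslide : ¬(k = r ∧ CanSlide r d))
    (h : legal (T + 1) (liftStack N r d) k = true) : k < T ∧ legal T d k = true := by
  have hT : d.stack T = [] := stack_eq_nil_of_length_le hd.length_stks.le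
  by_cases hkr : k = r ∧ d.stack r = []
  · obtain ⟨rfl, hs⟩ := hkr
    rcases eq_or_ne k 0 with rfl | h0
    · simp [legal_liftStack_zero hs hout] at h
    · rw [legal_liftStack_self hd h0 hr hs, decide_eq_true_iff] at h
      exact absurd ⟨rfl, h0, hs, h⟩ hslide
  rcases Nat.lt_or_ge k T with hkT | hkT
  · refine ⟨hkT, ?_⟩
    rwa [legal_liftStack_of_lt hd hr hkT (by by_cases k = r <;> simp_all)] at h
  · obtain rfl : k = T := by omega
    have hkr' : k ≠ r := fun h => hkr ⟨h, h ▸ hT⟩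
    rw [legal_eq_false_of_stack_eq_nil (by omega) (by rw [stack_liftStack (hd.length_stks ▸ hr),
      if_neg hkr', hT])] at h
    exact absurd h Bool.false_ne_true

theorem applyMove_liftInput_of_lt (hm : m < T) (hs : d.stack m ≠ []) :
    applyMove (T + 1) (liftInput N i d) m = liftInput N i (applyMove T d m) := by
  obtain ⟨x, s, hs⟩ := exists_cons_of_ne_nil hs
  have hs' : (liftInput N i d).stack m = x :: s := by rw [stack_liftInput, hs]
  have hlen : (applyMove (T + 1) (liftInput N i d) m).stks.length =
      (liftInput N i (applyMove T d m)).stks.length := by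
    simp [length_stks_applyMove, liftInput]
  rcases eq_or_ne m 0 with rfl | h0
  · refine ext_stack ?_ ?_ hlen fun j => ?_
    · rw [applyMove_zero hs', applyMove_zero hs]; rfl
    · rw [applyMove_zero hs', applyMove_zero hs]; rfl
    · simp only [stack_applyMove_zero hs', stack_liftInput, stack_applyMove_zero hs]
  · refine ext_stack ?_ ?_ hlen fun j => ?_
    · rw [applyMove_of_lt h0 (by omega : m < T + 1) hs', applyMove_of_lt h0 hm hs]; rfl
    · rw [applyMove_of_lt h0 (by omega : m < T + 1) hs', applyMove_of_lt h0 hm hs]; rfl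
    · simp only [stack_applyMove_of_lt h0 (by omega : m < T + 1) hs', stack_liftInput,
        stack_applyMove_of_lt h0 hm hs]

theorem applyMove_liftStack_of_lt (hd : d.stks.length = T) (hr : r ≤ T) (hm : m < T)
    (hs : d.stack m ≠ []) :
    applyMove (T + 1) (liftStack N r d) m = liftStack N r (applyMove T d m) := by
  obtain ⟨x, s, hs⟩ := exists_cons_of_ne_nil hs
  have hr' : r ≤ d.stks.length := hd ▸ hr
  have hr'' : r ≤ (applyMove T d m).stks.length := by rwa [length_stks_applyMove]
  have hs' : (liftStack N r d).stack m = x :: if m = r then s ++ [N + 1] else s := by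
    rw [stack_liftStack hr']
    split_ifs with hmr
    · subst hmr; simp [hs]
    · exact hs
  have hlen : (applyMove (T + 1) (liftStack N r d) m).stks.length =
      (liftStack N r (applyMove T d m)).stks.length := by
    simp [length_stks_applyMove, liftStack]
  rcases eq_or_ne m 0 with rfl | h0
  · refine ext_stack ?_ ?_ hlen fun j => ?_
    · rw [applyMove_zero hs', applyMove_zero hs]; rfl
    · rw [applyMove_zero hs', applyMove_zero hs]; rfl
    · rw [stack_applyMove_zero hs', stack_liftStack hr'', stack_liftStack hr',
        stack_applyMove_zero hs, stack_applyMove_zero hs]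
      split_ifs <;> first | rfl | omega
  · refine ext_stack ?_ ?_ hlen fun j => ?_
    · rw [applyMove_of_lt h0 (by omega : m < T + 1) hs', applyMove_of_lt h0 hm hs]; rfl
    · rw [applyMove_of_lt h0 (by omega : m < T + 1) hs', applyMove_of_lt h0 hm hs]; rfl
    · rw [stack_applyMove_of_lt h0 (by omega : m < T + 1) hs', stack_liftStack hr'',
        stack_liftStack hr', stack_liftStack hr', stack_applyMove_of_lt h0 hm hs,
        stack_applyMove_of_lt h0 hm hs]
      split_ifs <;> first | rfl | omega | (subst_vars; rfl)

theorem applyMove_liftStack_self (hd : d.stks.length = T) (hr : r ≤ T) (hslide : CanSlide r d) :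
    applyMove (T + 1) (liftStack N r d) r = liftStack N (r - 1) d := by
  obtain ⟨hr0, h, h'⟩ := hslide
  have hr' : r ≤ d.stks.length := hd ▸ hr
  have hs' : (liftStack N r d).stack r = [N + 1] := by
    rw [stack_liftStack hr', if_pos rfl, h]; rfl
  refine ext_stack ?_ ?_ ?_ fun j => ?_
  · rw [applyMove_of_lt hr0 (by omega : r < T + 1) hs']; rfl
  · rw [applyMove_of_lt hr0 (by omega : r < T + 1) hs']; rfl
  · simp [length_stks_applyMove, liftStack]
  · simp only [stack_applyMove_of_lt hr0 (by omega : r < T + 1) hs', stack_liftStack hr',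
      stack_liftStack (show r - 1 ≤ d.stks.length by omega)]
    split_ifs <;> first | omega | simp_all

theorem applyMove_push_shift_liftInput {x : ℕ} {rest : List ℕ} (hd : d.stks.length = T)
    (hT : T ≠ 0) (hin : d.input = x :: rest) :
    applyMove (T + 1) (applyMove (T + 1) (liftInput N (i + 1) d) (T + 1)) T =
      liftInput N i (applyMove T d T) := by
  have hin' : (liftInput N (i + 1) d).input = x :: (rest.take i ++ (N + 1) :: rest.drop i) := by
    simp [liftInput, hin]
  rw [applyMove_push_shift hT (by simp [liftInput, hd]) hin', applyMove_self hT hin]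
  refine ext_stack rfl rfl (by simp [liftInput]) fun j => ?_
  rw [stack_mk_set (c := liftInput N (i + 1) d)
    (by simp only [liftInput, length_append, length_singleton]; omega)]
  simp only [stack_liftInput]
  rw [stack_mk_set (c := d) (by omega)]

theorem applyMove_push_shift_liftStack {x : ℕ} {rest : List ℕ} (hd : d.stks.length = T)
    (hT : T ≠ 0) (hr : r ≤ T) (hin : d.input = x :: rest) :
    applyMove (T + 1) (applyMove (T + 1) (liftStack N r d) (T + 1)) T =
      liftStack N r (applyMove T d T) := by
  have hr' : r ≤ d.stks.length := hd ▸ hr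
  have hr'' : r ≤ (applyMove T d T).stks.length := by rwa [length_stks_applyMove]
  rw [applyMove_push_shift (c := liftStack N r d) hT (by simp [liftStack, hd]) hin]
  refine ext_stack ?_ ?_ ?_ fun j => ?_
  · rw [applyMove_self hT hin]; rfl
  · rw [applyMove_self hT hin]; rfl
  · simp [liftStack, length_stks_applyMove]
  · rw [stack_mk_set (c := liftStack N r d)
      (by simp only [liftStack, length_set, length_append, length_singleton]; omega),
      stack_liftStack hr'', stack_applyMove_self hT (by omega) hin,
      stack_applyMove_self hT (by omega) hin]
    simp only [stack_liftStack hr']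
    split_ifs <;> first | rfl | omega | (subst_vars; rfl)

end Lift

section Simulation

variable {N T i r m : ℕ} {d : Conf}

theorem ne_zero_of_legal_self (hd : d.stks.length = T) (h : legal T d T = true) : T ≠ 0 := by
  rintro rfl
  obtain ⟨s, hs⟩ := legal_zero_iff.1 h
  simp [stack_eq_nil_of_length_le hd.le] at hs

theorem greedyStep_liftInput_of_lt (hm : leftMove T d = some m) (hmT : m < T) :
    greedyStep leftMove (T + 1) (liftInput N i d) = liftInput N i (greedyStep leftMove T d) := by
  obtain ⟨-, hleg, hlow⟩ := leftMove_eq_some_iff.1 hm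
  have hm' : leftMove (T + 1) (liftInput N i d) = some m :=
    leftMove_eq_some_iff.2 ⟨by omega, by rwa [legal_liftInput_of_lt hmT],
      fun k hk => by rw [legal_liftInput_of_lt (by omega)]; exact hlow k hk⟩
  rw [greedyStep_of_leftMove_eq_some hm', greedyStep_of_leftMove_eq_some hm,
    applyMove_liftInput_of_lt hmT (stack_ne_nil_of_legal hmT hleg)]

theorem iterate_greedyStep_liftInput_push (hd : d.Valid N T) (hm : leftMove T d = some T)
    (hT : T ≠ 0) :
    (greedyStep leftMove (T + 1))^[2] (liftInput N (i + 1) d) =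
      liftInput N i (greedyStep leftMove T d) := by
  obtain ⟨-, hleg, hlow⟩ := leftMove_eq_some_iff.1 hm
  obtain ⟨x, rest, hin, hx⟩ := (legal_self_iff hT).1 hleg
  have hT' : (liftInput N (i + 1) d).stack T = [] := by
    rw [stack_liftInput, stack_eq_nil_of_length_le hd.length_stks.le]
  have hlow' : ∀ k ≤ T, legal (T + 1) (liftInput N (i + 1) d) k = false := fun k hk => by
    rcases Nat.lt_or_ge k T with hkT | hkT
    · rw [legal_liftInput_of_lt hkT]; exact hlow k hkT
    · exact legal_eq_false_of_stack_eq_nil (by omega) (by rw [show k = T by omega, hT'])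
  have hin' : (liftInput N (i + 1) d).input = x :: (rest.take i ++ (N + 1) :: rest.drop i) := by
    simp [liftInput, hin]
  rw [iterate_two_greedyStep_push hT (by simp [liftInput, hd.length_stks]) hin' hlow'
      (by rwa [stack_liftInput]) (by rw [hT']; rfl),
    applyMove_push_shift_liftInput hd.length_stks hT hin, greedyStep_of_leftMove_eq_some hm]

theorem greedyStep_liftInput_zero (hd : d.stks.length = T) (hlow : ∀ k < T, legal T d k = false) :
    greedyStep leftMove (T + 1) (liftInput N 0 d) = liftStack N T d := by
  have hT : (liftInput N 0 d).stack T = [] := by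
    rw [stack_liftInput, stack_eq_nil_of_length_le hd.le]
  have hin : (liftInput N 0 d).input = (N + 1) :: d.input := by simp [liftInput]
  have h : leftMove (T + 1) (liftInput N 0 d) = some (T + 1) := by
    refine leftMove_eq_some_iff.2 ⟨le_rfl, (legal_self_iff (by omega)).2 ⟨_, _, hin, ?_⟩,
      fun k hk => ?_⟩
    · rw [Nat.add_sub_cancel, hT]; rfl
    · rcases Nat.lt_or_ge k T with hkT | hkT
      · rw [legal_liftInput_of_lt hkT]; exact hlow k hkT
      · exact legal_eq_false_of_stack_eq_nil hk (by rw [show k = T by omega, hT])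
  rw [greedyStep_of_leftMove_eq_some h, applyMove_self (by omega) hin, Nat.add_sub_cancel, hT,
    liftStack, stack_eq_nil_of_length_le hd.le]
  rfl

theorem greedyStep_liftStack_slide (hd : d.Valid N T) (hr : r ≤ T) (hslide : CanSlide r d)
    (hlow : ∀ k < r, legal T d k = false) :
    greedyStep leftMove (T + 1) (liftStack N r d) = liftStack N (r - 1) d := by
  obtain ⟨hr0, hs, hs'⟩ := hslide
  have h : leftMove (T + 1) (liftStack N r d) = some r := by
    refine leftMove_eq_some_iff.2 ⟨by omega, by simp [legal_liftStack_self hd hr0 hr hs, hs'],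
      fun k hk => ?_⟩
    rw [legal_liftStack_of_lt hd hr (by omega) (.inl (by omega))]
    exact hlow k hk
  rw [greedyStep_of_leftMove_eq_some h,
    applyMove_liftStack_self hd.length_stks hr ⟨hr0, hs, hs'⟩]

theorem greedyStep_liftStack_of_lt (hd : d.Valid N T) (hm : leftMove T d = some m) (hmT : m < T)
    (hr : r ≤ T) (hslide : ¬(r ≤ m ∧ CanSlide r d)) :
    greedyStep leftMove (T + 1) (liftStack N r d) = liftStack N r (greedyStep leftMove T d) := by
  obtain ⟨-, hleg, hlow⟩ := leftMove_eq_some_iff.1 hm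
  have hs := stack_ne_nil_of_legal hmT hleg
  have h : leftMove (T + 1) (liftStack N r d) = some m := by
    refine leftMove_eq_some_iff.2 ⟨by omega, by rwa [legal_liftStack_of_lt hd hr hmT (.inr hs)],
      fun k hk => Bool.eq_false_iff.2 fun hk' => ?_⟩
    have := lt_and_legal_of_legal_liftStack hd (hd.output_length_lt hm) hr (by omega)
      (fun ⟨hkr, h⟩ => hslide ⟨by omega, h⟩) hk'
    simp [hlow k hk] at this
  rw [greedyStep_of_leftMove_eq_some h, greedyStep_of_leftMove_eq_some hm,
    applyMove_liftStack_of_lt hd.length_stks hr hmT hs]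

theorem iterate_greedyStep_liftStack_push (hd : d.Valid N T) (hm : leftMove T d = some T)
    (hT : T ≠ 0) (hr : r ≤ T) (hslide : ¬CanSlide r d) :
    (greedyStep leftMove (T + 1))^[2] (liftStack N r d) =
      liftStack N r (greedyStep leftMove T d) := by
  obtain ⟨-, hleg, hlow⟩ := leftMove_eq_some_iff.1 hm
  obtain ⟨x, rest, hin, hx⟩ := (legal_self_iff hT).1 hleg
  have hxN : x ≤ N := hd.input_le x (by simp [hin])
  have hr' : r ≤ d.stks.length := hd.length_stks ▸ hr
  have hlow' : ∀ k ≤ T, legal (T + 1) (liftStack N r d) k = false := fun k hk =>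
    Bool.eq_false_iff.2 fun hk' => by
      have := lt_and_legal_of_legal_liftStack hd (hd.output_length_lt hm) hr hk
        (fun h => hslide h.2) hk'
      simp [hlow k this.1] at this
  have hpush : ∀ j, canPush x ((liftStack N r d).stack j) = canPush x (d.stack j) := fun j => by
    rw [stack_liftStack hr']
    split_ifs with hj
    · subst hj; exact canPush_append_singleton hxN _
    · rfl
  rw [iterate_two_greedyStep_push (c := liftStack N r d) hT (by simp [liftStack, hd.length_stks])
      hin hlow' (by rwa [hpush]) (by rw [hpush, stack_eq_nil_of_length_le hd.length_stks.le]; rfl),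
    applyMove_push_shift_liftStack hd.length_stks hT hr hin, greedyStep_of_leftMove_eq_some hm]

theorem exists_iterate_liftStack_of_not_slide (hd : d.Valid N T) (hm : leftMove T d = some m)
    (hr : r ≤ T) (hslide : ¬(r ≤ m ∧ CanSlide r d)) :
    ∃ s, (greedyStep leftMove (T + 1))^[s] (liftStack N r d) =
      liftStack N r (greedyStep leftMove T d) := by
  obtain ⟨hmT, hleg, -⟩ := leftMove_eq_some_iff.1 hm
  rcases Nat.lt_or_ge m T with hmT' | hmT'
  · exact ⟨1, greedyStep_liftStack_of_lt hd hm hmT' hr hslide⟩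
  · obtain rfl : m = T := by omega
    exact ⟨2, iterate_greedyStep_liftStack_push hd hm (ne_zero_of_legal_self hd.length_stks hleg)
      hr fun h => hslide ⟨hr, h⟩⟩

theorem exists_iterate_liftStack (hd : d.Valid N T) (hm : leftMove T d = some m) (r : ℕ)
    (hr : r ≤ T) :
    ∃ s, ∃ r' ≤ T, (greedyStep leftMove (T + 1))^[s] (liftStack N r d) =
      liftStack N r' (greedyStep leftMove T d) := by
  induction r with
  | zero =>
    obtain ⟨s, hs⟩ := exists_iterate_liftStack_of_not_slide hd hm hr fun h => h.2.1 rfl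
    exact ⟨s, 0, hr, hs⟩
  | succ r ih =>
    by_cases hslide : r + 1 ≤ m ∧ CanSlide (r + 1) d
    · obtain ⟨s, r', hr', hs⟩ := ih (by omega)
      refine ⟨s + 1, r', hr', ?_⟩
      rw [Function.iterate_succ_apply, greedyStep_liftStack_slide hd hr hslide.2
        fun k hk => (leftMove_eq_some_iff.1 hm).2.2 k (by omega)]
      exact hs
    · obtain ⟨s, hs⟩ := exists_iterate_liftStack_of_not_slide hd hm hr hslide
      exact ⟨s, r + 1, hr, hs⟩

def Lifts (N T : ℕ) (d c : Conf) : Prop :=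
  (∃ i, c = liftInput N i d) ∨ ∃ r ≤ T, c = liftStack N r d

theorem Lifts.exists_iterate_greedyStep {c : Conf} (hd : d.Valid N T)
    (hm : leftMove T d = some m) (h : Lifts N T d c) :
    ∃ s, Lifts N T (greedyStep leftMove T d) ((greedyStep leftMove (T + 1))^[s] c) := by
  obtain ⟨hmT, hleg, hlow⟩ := leftMove_eq_some_iff.1 hm
  rcases h with ⟨i, rfl⟩ | ⟨r, hr, rfl⟩
  · rcases Nat.lt_or_ge m T with hmT' | hmT'
    · exact ⟨1, .inl ⟨i, greedyStep_liftInput_of_lt hm hmT'⟩⟩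
    obtain rfl : T = m := by omega
    cases i with
    | zero =>
      obtain ⟨s, r', hr', hs⟩ := exists_iterate_liftStack (N := N) hd hm T le_rfl
      refine ⟨s + 1, .inr ⟨r', hr', ?_⟩⟩
      rw [Function.iterate_succ_apply, greedyStep_liftInput_zero hd.length_stks hlow, hs]
    | succ i =>
      exact ⟨2, .inl ⟨i, iterate_greedyStep_liftInput_push hd hm
        (ne_zero_of_legal_self hd.length_stks hleg)⟩⟩
  · obtain ⟨s, r', hr', hs⟩ := exists_iterate_liftStack hd hm r hr
    exact ⟨s, .inr ⟨r', hr', hs⟩⟩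

theorem Lifts.exists_iterate {c : Conf} (hd : d.Valid N T) (h : Lifts N T d c) (k : ℕ) :
    ∃ s, Lifts N T ((greedyStep leftMove T)^[k] d) ((greedyStep leftMove (T + 1))^[s] c) := by
  induction k with
  | zero => exact ⟨0, h⟩
  | succ k ih =>
    obtain ⟨s, hs⟩ := ih
    rw [Function.iterate_succ_apply']
    cases hm : leftMove T ((greedyStep leftMove T)^[k] d) with
    | none => exact ⟨s, by simpa [greedyStep, hm] using hs⟩
    | some m =>
      obtain ⟨s', hs'⟩ := hs.exists_iterate_greedyStep (hd.iterate k) hm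
      exact ⟨s' + s, by rwa [Function.iterate_add_apply]⟩

theorem greedyStep_liftStack_zero_finalConf :
    greedyStep leftMove (T + 1) (liftStack N 0 (finalConf T N)) = finalConf (T + 1) (N + 1) := by
  have hs : (liftStack N 0 (finalConf T N)).stack 0 = [N + 1] := by
    rw [stack_liftStack (Nat.zero_le _), if_pos rfl]
    simp [finalConf, stack]
  have h : leftMove (T + 1) (liftStack N 0 (finalConf T N)) = some 0 :=
    leftMove_eq_some_iff.2
      ⟨Nat.zero_le _, legal_zero_iff.2 ⟨[], by simp [liftStack, finalConf]⟩, nofun⟩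
  rw [greedyStep_of_leftMove_eq_some h]
  refine ext_stack ?_ ?_ ?_ fun j => ?_
  · rw [applyMove_zero hs]; rfl
  · rw [applyMove_zero hs]; simp [liftStack, finalConf, range'_concat, Nat.add_comm]
  · simp [length_stks_applyMove, liftStack, finalConf]
  · rw [stack_applyMove_zero hs, stack_liftStack (Nat.zero_le _)]
    simp [finalConf, stack]

theorem exists_iterate_liftStack_finalConf (r : ℕ) (hr : r ≤ T) :
    ∃ s, (greedyStep leftMove (T + 1))^[s] (liftStack N r (finalConf T N)) =
      finalConf (T + 1) (N + 1) := by
  have hempty : ∀ j, (finalConf T N).stack j = [] := by simp [finalConf, stack]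
  induction r with
  | zero => exact ⟨1, greedyStep_liftStack_zero_finalConf⟩
  | succ r ih =>
    obtain ⟨s, hs⟩ := ih (by omega)
    refine ⟨s + 1, ?_⟩
    rw [Function.iterate_succ_apply, greedyStep_liftStack_slide (valid_finalConf N T) hr
      ⟨by omega, hempty _, hempty _⟩ fun k _ => legal_eq_false_of_empty rfl hempty]
    exact hs

theorem Lifts.exists_iterate_eq_finalConf {c : Conf} (h : Lifts N T (finalConf T N) c) :
    ∃ s, (greedyStep leftMove (T + 1))^[s] c = finalConf (T + 1) (N + 1) := by
  rcases h with ⟨i, rfl⟩ | ⟨r, hr, rfl⟩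
  · obtain ⟨s, hs⟩ := exists_iterate_liftStack_finalConf (N := N) T le_rfl
    refine ⟨s + 1, ?_⟩
    have : liftInput N i (finalConf T N) = liftInput N 0 (finalConf T N) := by
      simp [liftInput, finalConf]
    rw [Function.iterate_succ_apply, this, greedyStep_liftInput_zero (by simp [finalConf])
      fun k _ => legal_eq_false_of_empty rfl (by simp [finalConf, stack])]
    exact hs
  · exact exists_iterate_liftStack_finalConf r hr

end Simulation

theorem stmt6_general (t : ℕ) (ht : 1 ≤ t) (p : List ℕ) (hp : IsPermOf p.length p)
    (h : LeftGreedySorts (t - 1) p) (i : ℕ) :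
    LeftGreedySorts t (p.take i ++ (p.length + 1) :: p.drop i) := by
  obtain ⟨T, rfl⟩ : ∃ T, t = T + 1 := ⟨t - 1, by omega⟩
  obtain ⟨K, hK⟩ := h
  rw [Nat.add_sub_cancel] at hK
  have hinit : Lifts p.length T (initConf T p)
      (initConf (T + 1) (p.take i ++ (p.length + 1) :: p.drop i)) :=
    .inl ⟨i, by simp [initConf, liftInput, replicate_succ']⟩
  obtain ⟨s, hs⟩ := hinit.exists_iterate (valid_initConf T hp) K
  rw [hK] at hs
  obtain ⟨s', hs'⟩ := hs.exists_iterate_eq_finalConf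
  refine ⟨s' + s, ?_⟩
  rw [Function.iterate_add_apply, hs']
  congr 1
  simp only [length_append, length_take, length_cons, length_drop]
  omega

/-- If `p` (of length `n-1`) is sortable by the left-greedy algorithm on `t-1` stacks,
inserting the value `n = p.length + 1` anywhere gives a permutation sortable by the
left-greedy algorithm on `t` stacks. -/
theorem stmt6 (t : ℕ) (ht : 1 ≤ t) (p : List ℕ) (hp : IsPermOf p.length p)
    (h : LeftGreedySorts (t - 1) p) (i : ℕ) (hi : i ≤ p.length) :
    LeftGreedySorts t (p.take i ++ (p.length + 1) :: p.drop i) :=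
  stmt6_general t ht p hp h i
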